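/- With Φ_m and linkedness as defined, every maximal set U ⊆ F₂^{2m} of pairwise unlinked indices with |U| = 2^m is either an m-dimensional F₂-linear subspace of F₂^{2m} or a coset of such a subspace. -/

import Mathlib

/-- `Φ₁((u₁,u₂),(v₁,v₂)) = (u₁+v₁)(u₁+v₂)` in `F₂`. -/
def Phi1 (u v : ZMod 2 × ZMod 2) : ZMod 2 := (u.1 + v.1) * (u.1 + v.2)

/-- `Φ_m(u,v) = Σ_{i=1}^m Φ₁(u(i),v(i))`, for `u, v ∈ F₂^{2m} ≅ (F₂²)^m`. -/
def PhiM {m : ℕ} (u v : Fin m → ZMod 2 × ZMod 2) : ZMod 2 := ∑ i, Phi1 (u i) (v i)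

/-- `u` and `v` are unlinked if `Φ_m(u,v) + Φ_m(v,u) = 0`. -/
def Unlinked {m : ℕ} (u v : Fin m → ZMod 2 × ZMod 2) : Prop := PhiM u v + PhiM v u = 0

namespace Stmt7Aux

abbrev V (m : ℕ) := Fin m → ZMod 2 × ZMod 2

/-- The quadratic function whose zero set encodes unlinkedness of differences. -/
def f {m : ℕ} (d : V m) : ZMod 2 := ∑ i, (d i).1 * (1 + (d i).2)

/-- The standard symplectic form, the polarization of `f`. -/
def B (m : ℕ) : LinearMap.BilinForm (ZMod 2) (V m) :=
  LinearMap.mk₂ (ZMod 2) (fun d e => ∑ i, ((d i).1 * (e i).2 + (d i).2 * (e i).1))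
    (fun d d' e => by
      rw [← Finset.sum_add_distrib]
      refine Finset.sum_congr rfl fun i _ => by
        simp [Prod.fst_add, Prod.snd_add]; ring)
    (fun c d e => by
      rw [Finset.smul_sum]
      refine Finset.sum_congr rfl fun i _ => by
        simp [Prod.smul_fst, Prod.smul_snd, smul_eq_mul]; ring)
    (fun d e e' => by
      rw [← Finset.sum_add_distrib]
      refine Finset.sum_congr rfl fun i _ => by
        simp [Prod.fst_add, Prod.snd_add]; ring)
    (fun c d e => by
      rw [Finset.smul_sum]
      refine Finset.sum_congr rfl fun i _ => by
        simp [Prod.smul_fst, Prod.smul_snd, smul_eq_mul]; ring)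

lemma B_apply {m : ℕ} (d e : V m) :
    B m d e = ∑ i, ((d i).1 * (e i).2 + (d i).2 * (e i).1) := rfl

lemma unlinked_iff {m : ℕ} (u v : V m) : Unlinked u v ↔ f (u + v) = 0 := by
  have key : PhiM u v + PhiM v u = f (u + v) := by
    rw [PhiM, PhiM, f, ← Finset.sum_add_distrib]
    refine Finset.sum_congr rfl fun i _ => ?_
    have : ∀ a b : ZMod 2 × ZMod 2,
        Phi1 a b + Phi1 b a = (a + b).1 * (1 + (a + b).2) := by decide
    simpa using this (u i) (v i)
  rw [Unlinked, key]

lemma f_add {m : ℕ} (d e : V m) : f (d + e) = f d + f e + B m d e := by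
  rw [f, f, f, B_apply, ← Finset.sum_add_distrib, ← Finset.sum_add_distrib]
  refine Finset.sum_congr rfl fun i _ => ?_
  have : ∀ a b : ZMod 2 × ZMod 2,
      (a + b).1 * (1 + (a + b).2) =
        a.1 * (1 + a.2) + b.1 * (1 + b.2) + (a.1 * b.2 + a.2 * b.1) := by decide
  simpa using this (d i) (e i)

lemma B_symm {m : ℕ} (d e : V m) : B m d e = B m e d := by
  rw [B_apply, B_apply]
  refine Finset.sum_congr rfl fun i _ => by ring

lemma B_nondegenerate (m : ℕ) : (B m).Nondegenerate := by
  suffices hL : ∀ d : V m, (∀ n, B m d n = 0) → d = 0 by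
    exact ⟨hL, fun d hd => hL d fun n => by rw [B_symm]; exact hd n⟩
  intro d hd
  funext i
  have h1 := hd (fun j => if j = i then ((0 : ZMod 2), (1 : ZMod 2)) else 0)
  have h2 := hd (fun j => if j = i then ((1 : ZMod 2), (0 : ZMod 2)) else 0)
  rw [B_apply] at h1 h2
  rw [Finset.sum_eq_single i (fun j _ hj => by simp [hj]) (by simp)] at h1 h2
  simp only [if_pos rfl, mul_one, mul_zero, zero_add, add_zero] at h1 h2
  simp only [Pi.zero_apply]
  ext
  · simpa using h1
  · simpa using h2

lemma add_self_V {m : ℕ} (x : V m) : x + x = 0 := by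
  funext i
  have : ∀ a : ZMod 2 × ZMod 2, a + a = 0 := by decide
  simpa using this (x i)

end Stmt7Aux

open Stmt7Aux in
/-- a set of pairwise unlinked indices of cardinality `2^m` is an
`m`-dimensional `F₂`-subspace of `F₂^{2m}` or a coset of such a subspace. -/
theorem stmt_7 (m : ℕ) (hm : 1 ≤ m) (U : Finset (Fin m → ZMod 2 × ZMod 2))
    (hU : ∀ u ∈ U, ∀ v ∈ U, Unlinked u v) (hcard : U.card = 2 ^ m) :
    ∃ W : Submodule (ZMod 2) (Fin m → ZMod 2 × ZMod 2),
      Module.finrank (ZMod 2) W = m ∧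
        ((U : Set (Fin m → ZMod 2 × ZMod 2)) = (W : Set (Fin m → ZMod 2 × ZMod 2)) ∨
          ∃ w : Fin m → ZMod 2 × ZMod 2,
            (U : Set (Fin m → ZMod 2 × ZMod 2)) =
              (fun x => w + x) '' (W : Set (Fin m → ZMod 2 × ZMod 2))) := by
  classical
  -- pick a base point
  have hUne : U.Nonempty := by
    rw [← Finset.card_pos, hcard]; positivity
  obtain ⟨u₀, hu₀⟩ := hUne
  -- the difference set
  set D : Finset (V m) := U.image (fun u => u + u₀) with hD
  have hDcard : D.card = 2 ^ m := by
    rw [hD, Finset.card_image_of_injective _ (add_left_injective u₀), hcard]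
  have hmemD : ∀ d ∈ D, ∃ u ∈ U, d = u + u₀ := by
    intro d hd
    rw [hD, Finset.mem_image] at hd
    obtain ⟨u, hu, rfl⟩ := hd
    exact ⟨u, hu, rfl⟩
  -- every difference of elements of U lies in the zero set of f
  have hfUV : ∀ u ∈ U, ∀ v ∈ U, f (u + v) = 0 := fun u hu v hv =>
    (unlinked_iff u v).mp (hU u hu v hv)
  have hfD : ∀ d ∈ D, f d = 0 := by
    intro d hd
    obtain ⟨u, hu, rfl⟩ := hmemD d hd
    exact hfUV u hu u₀ hu₀
  -- elements of D are pairwise B-orthogonal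
  have hBD : ∀ d ∈ D, ∀ e ∈ D, B m d e = 0 := by
    intro d hd e he
    obtain ⟨u, hu, rfl⟩ := hmemD d hd
    obtain ⟨v, hv, rfl⟩ := hmemD e he
    have hde : f ((u + u₀) + (v + u₀)) = 0 := by
      rw [add_add_add_comm, add_self_V, add_zero]
      exact hfUV u hu v hv
    have := f_add (u + u₀) (v + u₀)
    rw [hde, hfD _ hd, hfD _ he, zero_add, zero_add] at this
    exact this.symm
  -- the span of D is totally isotropic
  set W : Submodule (ZMod 2) (V m) := Submodule.span (ZMod 2) (D : Set (V m)) with hW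
  have hWiso : ∀ x ∈ W, ∀ y ∈ W, B m x y = 0 := by
    intro x hx
    induction hx using Submodule.span_induction with
    | mem d hd =>
      intro y hy
      induction hy using Submodule.span_induction with
      | mem e he => exact hBD d hd e he
      | zero => simp
      | add y z _ _ hy hz => rw [map_add, hy, hz, add_zero]
      | smul c y _ hy => rw [map_smul, hy, smul_zero]
    | zero => intro y _; simp
    | add x z _ _ hx hz =>
      intro y hy
      rw [map_add, LinearMap.add_apply, hx y hy, hz y hy, add_zero]
    | smul c x _ hx =>
      intro y hy
      rw [map_smul, LinearMap.smul_apply, hx y hy, smul_zero]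
  -- W is contained in its own orthogonal complement
  have hWle : W ≤ (B m).orthogonal W := by
    intro x hx n hn
    exact hWiso n hn x hx
  have hrefl : (B m).IsRefl := fun x y h => by rw [B_symm]; exact h
  have hdim : Module.finrank (ZMod 2) (V m) = 2 * m := by
    simp [Module.finrank_pi_fintype (ZMod 2), Module.finrank_prod, mul_comm]
  have hrank :
      Module.finrank (ZMod 2) W + Module.finrank (ZMod 2) ((B m).orthogonal W) = 2 * m := by
    have h := LinearMap.BilinForm.finrank_add_finrank_orthogonal (B := B m) hrefl W
    rw [LinearMap.BilinForm.orthogonal_top_eq_bot (B_nondegenerate m), inf_bot_eq,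
      finrank_bot, add_zero, hdim] at h
    exact h
  have hWm : Module.finrank (ZMod 2) W ≤ m := by
    have := Submodule.finrank_mono hWle
    omega
  -- counting: D fills out all of W
  have hDsub : D ⊆ (W : Set (V m)).toFinset := by
    intro d hd
    rw [Set.mem_toFinset]
    exact Submodule.subset_span hd
  have hWcard : (W : Set (V m)).toFinset.card = 2 ^ Module.finrank (ZMod 2) W := by
    rw [Set.toFinset_card]
    have := Module.card_eq_pow_finrank (K := ZMod 2) (V := W)
    simpa [ZMod.card] using this
  have hle : (W : Set (V m)).toFinset.card ≤ D.card := by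
    rw [hWcard, hDcard]
    exact Nat.pow_le_pow_right (by norm_num) hWm
  have hDW : (W : Set (V m)).toFinset = D := (Finset.eq_of_subset_of_card_le hDsub hle).symm
  have hrankm : Module.finrank (ZMod 2) W = m := by
    have h2 : (2 : ℕ) ^ Module.finrank (ZMod 2) W = 2 ^ m := by
      rw [← hWcard, hDW, hDcard]
    exact Nat.pow_right_injective (le_refl 2) h2
  have hWD : (W : Set (V m)) = ↑D := by
    rw [← hDW, Set.coe_toFinset]
  have cancel : ∀ a b : V m, b + (a + b) = a := fun a b => by
    rw [add_comm a b, ← add_assoc, add_self_V, zero_add]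
  refine ⟨W, hrankm, Or.inr ⟨u₀, ?_⟩⟩
  ext x
  constructor
  · intro hx
    refine ⟨x + u₀, ?_, cancel x u₀⟩
    rw [hWD]
    exact_mod_cast Finset.mem_image_of_mem (fun u => u + u₀) hx
  · rintro ⟨y, hy, rfl⟩
    rw [hWD] at hy
    obtain ⟨u, hu, rfl⟩ := hmemD y (by exact_mod_cast hy)
    simpa [cancel u u₀] using hu
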